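/- Let E be a finite-dimensional right ℍ-vector space with a quaternionic skew-Hermitian form ⟨·,·⟩ : E × E → ℍ, i.e., ⟨u, v·h⟩ = ⟨u,v⟩·h, ⟨u,v⟩ = -conj(⟨v,u⟩), and the form is nondegenerate. Then E admits a basis e₁, ..., eₙ with ⟨eᵢ, eₖ⟩ = δᵢₖ · j (where j is the standard quaternion unit with j² = -1). -/

import Mathlib

open Quaternion

/-- The standard quaternion unit `j`. -/
def quatJ : ℍ[ℝ] := ⟨0, 0, 1, 0⟩

/-- The quaternion unit `i` (auxiliary). -/
def quatI : ℍ[ℝ] := ⟨0, 1, 0, 0⟩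

@[simp] lemma quatJ_re : quatJ.re = 0 := rfl
@[simp] lemma quatJ_imI : quatJ.imI = 0 := rfl
@[simp] lemma quatJ_imJ : quatJ.imJ = 1 := rfl
@[simp] lemma quatJ_imK : quatJ.imK = 0 := rfl
@[simp] lemma quatI_re : quatI.re = 0 := rfl
@[simp] lemma quatI_imI : quatI.imI = 1 := rfl
@[simp] lemma quatI_imJ : quatI.imJ = 0 := rfl
@[simp] lemma quatI_imK : quatI.imK = 0 := rfl

lemma quatJ_mul_quatJ : quatJ * quatJ = -1 := by
  ext <;> simp

lemma quatJ_ne_zero : quatJ ≠ 0 := by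
  intro h; have := congrArg QuaternionAlgebra.imJ h; simp at this

lemma quatI_ne_zero : quatI ≠ 0 := by
  intro h; have := congrArg QuaternionAlgebra.imI h; simp at this

lemma conj_to_j (q : ℍ[ℝ]) (hq : q ≠ 0) (hre : q.re = 0) :
    ∃ h : ℍ[ℝ], star h * q * h = quatJ := by
  have hns : (0:ℝ) < normSq q := lt_of_le_of_ne (normSq_nonneg) (Ne.symm (normSq_ne_zero.mpr hq))
  obtain ⟨r, hr⟩ : ∃ r : ℝ, r = Real.sqrt (normSq q) := ⟨_, rfl⟩
  have hrpos : 0 < r := hr ▸ Real.sqrt_pos.mpr hns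
  have hr2 : (r:ℝ) * r = q.imI^2 + q.imJ^2 + q.imK^2 := by
    rw [hr, Real.mul_self_sqrt (le_of_lt hns), normSq_def', hre]; ring
  obtain ⟨h₀, hh₀⟩ : ∃ h₀ : ℍ[ℝ], h₀ = q * quatJ - ((r:ℝ) : ℍ[ℝ]) := ⟨_, rfl⟩
  by_cases hz : h₀ = 0
  · have h1 : q * quatJ = ((r:ℝ) : ℍ[ℝ]) := sub_eq_zero.mp (hh₀ ▸ hz)
    have hqr : q = -((r:ℝ) : ℍ[ℝ]) * quatJ := by
      have := congrArg (· * quatJ) h1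
      simp only [mul_assoc, quatJ_mul_quatJ, mul_neg_one] at this
      linear_combination (norm := noncomm_ring) -this
    obtain ⟨t, ht⟩ : ∃ t : ℝ, t = (Real.sqrt r)⁻¹ := ⟨_, rfl⟩
    have htr : t * t * r = 1 := by
      rw [ht, ← Real.sqrt_inv, Real.mul_self_sqrt (by positivity)]
      field_simp
    refine ⟨quatI * ((t:ℝ) : ℍ[ℝ]), ?_⟩
    rw [hqr]
    ext <;> simp <;>
      first
        | ring1
        | linear_combination htr
        | linear_combination -htr
  · have key : q * h₀ = ((r:ℝ):ℍ[ℝ]) * h₀ * quatJ := by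
      rw [hh₀]
      ext <;> simp [hre] <;>
        first
          | ring1
          | linear_combination hr2
          | linear_combination -hr2
    have hns₀ : (0:ℝ) < normSq h₀ := lt_of_le_of_ne (normSq_nonneg) (Ne.symm (normSq_ne_zero.mpr hz))
    obtain ⟨t, ht⟩ : ∃ t : ℝ, t = (Real.sqrt (r * normSq h₀))⁻¹ := ⟨_, rfl⟩
    have htr : t * t * (r * normSq h₀) = 1 := by
      rw [ht, ← Real.sqrt_inv, Real.mul_self_sqrt (by positivity)]
      have : r * normSq h₀ ≠ 0 := by positivity
      field_simp
    refine ⟨h₀ * ((t:ℝ) : ℍ[ℝ]), ?_⟩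
    have c1 : star h₀ * (((r:ℝ):ℍ[ℝ]) * h₀ * quatJ) = ((r:ℝ):ℍ[ℝ]) * (star h₀ * h₀) * quatJ := by
      rw [← mul_assoc, ← mul_assoc, ← Quaternion.coe_commutes r (star h₀),
        mul_assoc (((r:ℝ):ℍ[ℝ])) (star h₀) h₀]
    have key2 : star h₀ * (q * h₀) = ((r * normSq h₀ : ℝ) : ℍ[ℝ]) * quatJ := by
      rw [key, c1, Quaternion.star_mul_self]
      norm_cast
    have expand : star (h₀ * ((t:ℝ):ℍ[ℝ])) * q * (h₀ * ((t:ℝ):ℍ[ℝ]))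
        = ((t:ℝ):ℍ[ℝ]) * (star h₀ * (q * h₀)) * ((t:ℝ):ℍ[ℝ]) := by
      rw [star_mul]
      have hsc : star (((t:ℝ):ℍ[ℝ])) = ((t:ℝ):ℍ[ℝ]) := by simp
      rw [hsc]; noncomm_ring
    rw [expand, key2]
    ext <;> simp <;>
      first
        | ring1
        | linear_combination htr
        | linear_combination -htr

universe u

theorem skewHermitian_diagonal_j_aux (n : ℕ) : ∀ {E : Type u} [AddCommGroup E] [Module (ℍ[ℝ])ᵐᵒᵖ E]
    (b : Module.Basis (Fin n) (ℍ[ℝ])ᵐᵒᵖ E) (Φ : E → E → ℍ[ℝ]),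
    (∀ u u' v, Φ (u + u') v = Φ u v + Φ u' v) →
    (∀ u v v', Φ u (v + v') = Φ u v + Φ u v') →
    (∀ (h : ℍ[ℝ]) (u v : E), Φ u (MulOpposite.op h • v) = Φ u v * h) →
    (∀ u v, Φ u v = -star (Φ v u)) →
    (∀ u, (∀ v, Φ u v = 0) → u = 0) →
    ∃ e : Module.Basis (Fin n) (ℍ[ℝ])ᵐᵒᵖ E,
      ∀ i k : Fin n, Φ (e i) (e k) = if i = k then quatJ else 0 := by
  induction n with
  | zero =>
    intro E _ _ b Φ _ _ _ _ _
    exact ⟨b, fun i => i.elim0⟩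
  | succ n ih =>
    intro E _ _ b Φ hadd₁ hadd₂ hlin hskew hnondeg
    haveI : Module.Finite (ℍ[ℝ])ᵐᵒᵖ E := Module.Finite.of_basis b
    have hfr : Module.finrank (ℍ[ℝ])ᵐᵒᵖ E = n + 1 := by
      rw [Module.finrank_eq_card_basis b, Fintype.card_fin]
    -- additive facts
    have hΦ0r : ∀ v : E, Φ v 0 = 0 := by
      intro v
      have h := hadd₂ v 0 0
      rw [add_zero] at h
      exact (left_eq_add.mp h)
    have hΦ0l : ∀ v : E, Φ 0 v = 0 := by
      intro v
      have h := hadd₁ 0 0 v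
      rw [add_zero] at h
      exact (left_eq_add.mp h)
    have hleft : ∀ (h : ℍ[ℝ]) (w v : E),
        Φ (MulOpposite.op h • w) v = star h * Φ w v := by
      intro h w v
      rw [hskew (MulOpposite.op h • w) v, hlin, star_mul, hskew w v, mul_neg]
    -- find anisotropic vector
    have hexists : ∃ u₀ : E, Φ u₀ u₀ ≠ 0 := by
      by_contra hall
      push_neg at hall
      have hsym : ∀ x y : E, Φ y x = -Φ x y := by
        intro x y
        have h1 := hall (x + y)
        rw [hadd₁, hadd₂, hadd₂, hall x, hall y, zero_add, add_zero] at h1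
        linear_combination (norm := noncomm_ring) h1
      have hreal : ∀ x y : E, star (Φ x y) = Φ x y := by
        intro x y
        calc star (Φ x y) = -Φ y x := by rw [hskew x y, star_neg, star_star]
          _ = Φ x y := by rw [hsym x y, neg_neg]
      have hzero : ∀ x y : E, Φ x y = 0 := by
        intro x y
        have hx : Φ x y = ((Φ x y).re : ℍ[ℝ]) :=
          Quaternion.star_eq_self.mp (hreal x y)
        have hy : Φ x y * quatI = (((Φ x y * quatI)).re : ℍ[ℝ]) := by
          rw [← hlin quatI x y]
          exact Quaternion.star_eq_self.mp (hreal x _)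
        have hyre : (Φ x y * quatI).re = 0 := by
          rw [hx]; simp
        rw [hyre] at hy
        norm_num at hy
        rcases hy with h | h
        · exact h
        · exact absurd h quatI_ne_zero
      exact b.ne_zero 0 (hnondeg (b 0) (hzero (b 0)))
    obtain ⟨u₀, hu₀⟩ := hexists
    have hqre : (Φ u₀ u₀).re = 0 := by
      have h1 := hskew u₀ u₀
      have h2 : star (Φ u₀ u₀) = -Φ u₀ u₀ := by
        nth_rewrite 2 [h1]
        rw [neg_neg]
      exact Quaternion.star_eq_neg.mp h2
    obtain ⟨h, hh⟩ := conj_to_j (Φ u₀ u₀) hu₀ hqre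
    obtain ⟨u, hu⟩ : ∃ u : E, u = MulOpposite.op h • u₀ := ⟨_, rfl⟩
    have huu : Φ u u = quatJ := by
      rw [hu, hlin, hleft, hh]
    have hune : u ≠ 0 := by
      intro h0
      exact quatJ_ne_zero (by rw [← huu, h0, hΦ0l])
    -- the orthogonal complement of u
    obtain ⟨W, hWmem⟩ : ∃ W : Submodule (ℍ[ℝ])ᵐᵒᵖ E, ∀ v, v ∈ W ↔ Φ u v = 0 := by
      refine ⟨{ carrier := {v | Φ u v = 0}, add_mem' := ?_, zero_mem' := ?_, smul_mem' := ?_ },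
        fun v => Iff.rfl⟩
      · intro a c ha hc
        show Φ u (a + c) = 0
        rw [hadd₂, ha, hc, add_zero]
      · exact hΦ0r u
      · intro c v hv
        show Φ u (c • v) = 0
        rw [← MulOpposite.op_unop c, hlin, hv, zero_mul]
    have hdec : ∀ v : E, v + MulOpposite.op (quatJ * Φ u v) • u ∈ W := by
      intro v
      rw [hWmem, hadd₂, hlin, huu, ← mul_assoc, quatJ_mul_quatJ, neg_one_mul, add_neg_cancel]
    have hsup : ∀ v : E, ∃ w ∈ W, ∃ c : ℍ[ℝ], v = w + MulOpposite.op c • u := by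
      intro v
      refine ⟨v + MulOpposite.op (quatJ * Φ u v) • u, hdec v, -(quatJ * Φ u v), ?_⟩
      rw [MulOpposite.op_neg, neg_smul]
      abel
    have hWsup : W ⊔ Submodule.span (ℍ[ℝ])ᵐᵒᵖ {u} = ⊤ := by
      rw [eq_top_iff]
      intro v _
      obtain ⟨w, hw, c, rfl⟩ := hsup v
      exact Submodule.add_mem _ (Submodule.mem_sup_left hw)
        (Submodule.mem_sup_right (Submodule.smul_mem _ _ (Submodule.mem_span_singleton_self u)))
    have hWinf : W ⊓ Submodule.span (ℍ[ℝ])ᵐᵒᵖ {u} = ⊥ := by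
      rw [eq_bot_iff]
      rintro v ⟨hv1, hv2⟩
      obtain ⟨c, rfl⟩ := Submodule.mem_span_singleton.mp hv2
      have h1 : Φ u (c • u) = 0 := (hWmem _).mp hv1
      rw [← MulOpposite.op_unop c, hlin, huu] at h1
      have h2 : c.unop = 0 := (mul_eq_zero.mp h1).resolve_left quatJ_ne_zero
      have h3 : c = 0 := MulOpposite.unop_injective h2
      rw [h3, zero_smul]
      exact Submodule.zero_mem ⊥
    have hfrW : Module.finrank (ℍ[ℝ])ᵐᵒᵖ W = n := by
      have h1 := Submodule.finrank_sup_add_finrank_inf_eq W (Submodule.span (ℍ[ℝ])ᵐᵒᵖ {u})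
      rw [hWsup, hWinf, finrank_span_singleton hune, finrank_top, hfr, finrank_bot] at h1
      omega
    -- apply the induction hypothesis to W
    obtain ⟨e'', he''⟩ := ih (Module.finBasisOfFinrankEq (ℍ[ℝ])ᵐᵒᵖ W hfrW)
      (fun w w' => Φ (↑w) (↑w'))
      (fun x y z => show Φ ↑(x + y) ↑z = Φ ↑x ↑z + Φ ↑y ↑z by
        rw [Submodule.coe_add]; exact hadd₁ _ _ _)
      (fun x y z => show Φ ↑x ↑(y + z) = Φ ↑x ↑y + Φ ↑x ↑z by
        rw [Submodule.coe_add]; exact hadd₂ _ _ _)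
      (fun h w w' => show Φ ↑w ↑(MulOpposite.op h • w') = Φ ↑w ↑w' * h by
        rw [Submodule.coe_smul]; exact hlin _ _ _)
      (fun w w' => hskew _ _)
      (fun w hw => by
        have hWu : Φ (↑w) u = 0 := by
          rw [hskew, (hWmem ↑w).mp w.2, star_zero, neg_zero]
        have hall : ∀ v : E, Φ (↑w) v = 0 := by
          intro v
          obtain ⟨w', hw', c, rfl⟩ := hsup v
          rw [hadd₂, hlin, hWu, zero_mul, add_zero]
          exact hw ⟨w', hw'⟩
        exact Subtype.ext (hnondeg _ hall))
    have hmemW : ∀ i : Fin n, Φ u (↑(e'' i)) = 0 := fun i => (hWmem _).mp (e'' i).2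
    -- the new basis
    obtain ⟨f, hfdef⟩ : ∃ f : Fin (n+1) → E, f = Fin.cons u (fun i => (↑(e'' i) : E)) := ⟨_, rfl⟩
    have hf : ∀ i k, Φ (f i) (f k) = if i = k then quatJ else 0 := by
      intro i k
      rw [hfdef]
      induction i using Fin.cases with
      | zero =>
        induction k using Fin.cases with
        | zero => simpa using huu
        | succ k =>
          rw [Fin.cons_zero, Fin.cons_succ, hmemW k, if_neg (Ne.symm (Fin.succ_ne_zero k))]
      | succ i =>
        induction k using Fin.cases with
        | zero =>
          rw [Fin.cons_zero, Fin.cons_succ, hskew, hmemW i, star_zero, neg_zero,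
            if_neg (Fin.succ_ne_zero i)]
        | succ k =>
          rw [Fin.cons_succ, Fin.cons_succ, he'' i k]
          simp [Fin.succ_inj]
    have hli : LinearIndependent (ℍ[ℝ])ᵐᵒᵖ f := by
      rw [Fintype.linearIndependent_iff]
      intro g hg k
      have h0 : Φ (f k) (∑ i, g i • f i) = 0 := by rw [hg]; exact hΦ0r _
      have hsum := map_sum (AddMonoidHom.mk' (Φ (f k)) (hadd₂ (f k)))
        (fun i => g i • f i) Finset.univ
      replace hsum : Φ (f k) (∑ i, g i • f i) = ∑ i, Φ (f k) (g i • f i) := hsum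
      have hterm : ∀ i, Φ (f k) (g i • f i) = Φ (f k) (f i) * (g i).unop := fun i =>
        calc Φ (f k) (g i • f i)
            = Φ (f k) (MulOpposite.op ((g i).unop) • f i) := by rw [MulOpposite.op_unop]
          _ = Φ (f k) (f i) * (g i).unop := hlin _ _ _
      rw [hsum] at h0
      simp only [hterm] at h0
      rw [Finset.sum_eq_single k] at h0
      · rw [hf k k, if_pos rfl] at h0
        have := (mul_eq_zero.mp h0).resolve_left quatJ_ne_zero
        exact MulOpposite.unop_injective this
      · intro i _ hik
        rw [hf k i, if_neg fun hh => hik hh.symm, zero_mul]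
      · intro hk
        exact absurd (Finset.mem_univ k) hk
    have hcard : Fintype.card (Fin (n+1)) = Module.finrank (ℍ[ℝ])ᵐᵒᵖ E := by
      rw [Fintype.card_fin, hfr]
    refine ⟨basisOfLinearIndependentOfCardEqFinrank hli hcard, fun i k => ?_⟩
    rw [coe_basisOfLinearIndependentOfCardEqFinrank hli hcard]
    exact hf i k


/-- Every nondegenerate quaternionic skew-Hermitian form on a finite-dimensional right
`ℍ`-vector space admits a basis in which its matrix is `diag(j, …, j)`. -/
theorem skewHermitian_diagonal_j {n : ℕ} (E : Type*) [AddCommGroup E]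
    [Module (ℍ[ℝ])ᵐᵒᵖ E] (b : Module.Basis (Fin n) (ℍ[ℝ])ᵐᵒᵖ E)
    (Φ : E → E → ℍ[ℝ])
    (hadd₁ : ∀ u u' v, Φ (u + u') v = Φ u v + Φ u' v)
    (hadd₂ : ∀ u v v', Φ u (v + v') = Φ u v + Φ u v')
    (hlin : ∀ (h : ℍ[ℝ]) (u v : E), Φ u (MulOpposite.op h • v) = Φ u v * h)
    (hskew : ∀ u v, Φ u v = -star (Φ v u))
    (hnondeg : ∀ u, (∀ v, Φ u v = 0) → u = 0) :
    ∃ e : Module.Basis (Fin n) (ℍ[ℝ])ᵐᵒᵖ E,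
      ∀ i k : Fin n, Φ (e i) (e k) = if i = k then quatJ else 0 := by
  exact skewHermitian_diagonal_j_aux n b Φ hadd₁ hadd₂ hlin hskew hnondeg
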